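/- (Proposition 'Weighted Majority: GTR Version', variance part.) For every integer h ≥ 1, every edge-weight assignment with τ_v > 0 for all nonempty v, and every unit flow Ψ: ∑_{x : V → Φ} P(x) S(x)² = 1 + K_Ψ, i.e., Var[S] = 1 + K_Ψ. -/

import Mathlib

open scoped BigOperators

/-- The matrix exponential of a real `Φ × Φ` matrix. -/
noncomputable def matExp {Φ : Type*} [Fintype Φ] [DecidableEq Φ] (A : Matrix Φ Φ ℝ) :
    Matrix Φ Φ ℝ := NormedSpace.exp A

/-- Sum of edge weights along the ancestor path of `v` (heap indexing of the binary
tree: vertices are positive integers, the root is `1`, and the parent of `v ≥ 2` is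
`v / 2`), stopping at (and excluding) the ancestor `a`.  This is `τ(a, v)`. -/
noncomputable def pathSum (τ : ℕ → ℝ) (a : ℕ) (v : ℕ) : ℝ :=
  if _h : v ≤ a then 0 else τ v + pathSum τ a (v / 2)
termination_by v
decreasing_by omega

/-- Lowest common ancestor (longest common prefix) of two same-level vertices in heap
indexing. -/
def lca (a b : ℕ) : ℕ :=
  if a = b then a else lca (a / 2) (b / 2)
termination_by a + b
decreasing_by omega

/-- Tree distance `τ(a,b) = τ(c,a) + τ(c,b)` where `c` is the longest common prefix of
the same-level vertices `a` and `b`. -/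
noncomputable def treeDist (τ : ℕ → ℝ) (a b : ℕ) : ℝ :=
  pathSum τ (lca a b) a + pathSum τ (lca a b) b

/-- Interpret a heap-index vertex `v ∈ {1, …, 2^{h+1} − 1}` of the complete binary tree
of depth `h` as an index into configurations (binary strings of length `m ≤ h`
correspond to the integers in `[2^m, 2^{m+1})`). -/
def idx (h v : ℕ) : Fin (2 ^ (h + 1) - 1) :=
  ⟨(v - 1) % (2 ^ (h + 1) - 1), Nat.mod_lt _ (by
    have : 2 ^ 1 ≤ 2 ^ (h + 1) := Nat.pow_le_pow_right (by norm_num) (by omega)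
    omega)⟩

/-- The GTR law on the complete binary tree of depth `h`: the probability
`P(x) = π(x_ρ) ∏_{v nonempty} (exp(τ_v Q))_{x_{parent(v)}, x_v}` of a configuration
`x` (configurations assign a state to each of the `2^{h+1} − 1` vertices). -/
noncomputable def gtrP {Φ : Type*} [Fintype Φ] [DecidableEq Φ]
    (h : ℕ) (π : Φ → ℝ) (Q : Matrix Φ Φ ℝ) (τ : ℕ → ℝ)
    (x : Fin (2 ^ (h + 1) - 1) → Φ) : ℝ :=
  π (x (idx h 1)) *
    ∏ v ∈ Finset.Ico 2 (2 ^ (h + 1)),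
      (matExp (τ v • Q)) (x (idx h (v / 2))) (x (idx h v))

/-- The estimator `S(x) = ∑_{ℓ leaf} Ψ(ℓ) ν_{x_ℓ} / Θ_{ρ,ℓ}` with `Θ_{ρ,ℓ} = e^{−τ(ρ,ℓ)}`. -/
noncomputable def estS {Φ : Type*} [Fintype Φ] [DecidableEq Φ]
    (h : ℕ) (ν : Φ → ℝ) (τ Ψ : ℕ → ℝ) (x : Fin (2 ^ (h + 1) - 1) → Φ) : ℝ :=
  ∑ ℓ ∈ Finset.Ico (2 ^ h) (2 ^ (h + 1)),
    Ψ ℓ * ν (x (idx h ℓ)) * Real.exp (pathSum τ 1 ℓ)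

/-- `K_Ψ = ∑_{v nonempty} (1 − e^{−2τ_v}) e^{2τ(ρ,v)} Ψ(v)²`. -/
noncomputable def Kflow (h : ℕ) (τ Ψ : ℕ → ℝ) : ℝ :=
  ∑ v ∈ Finset.Ico 2 (2 ^ (h + 1)),
    (1 - Real.exp (-(2 * τ v))) * Real.exp (2 * pathSum τ 1 v) * Ψ v ^ 2

/-- `Ψ` is a unit flow from the root to the leaves of the depth-`h` tree: nonnegative,
`Ψ(ρ) = 1`, and `Ψ(v) = Ψ(v0) + Ψ(v1)` for internal vertices. -/
def IsUnitFlow (h : ℕ) (Ψ : ℕ → ℝ) : Prop :=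
  Ψ 1 = 1 ∧ (∀ v, 1 ≤ v → v < 2 ^ (h + 1) → 0 ≤ Ψ v) ∧
    ∀ v, 1 ≤ v → v < 2 ^ h → Ψ v = Ψ (2 * v) + Ψ (2 * v + 1)

/-!
Expanding the square, `E[S²] = ∑_{ℓ,ℓ'} Ψ(ℓ) Ψ(ℓ') e^{τ(ρ,ℓ) + τ(ρ,ℓ')} E[ν(x_ℓ) ν(x_ℓ')]`.
Every edge kernel `e^{τ_v Q}` fixes constants, has `π` as stationary law (reversibility) and
`ν` as eigenvector with eigenvalue `e^{-τ_v}`. Integrating the vertices out one at a time, from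
the largest heap index down, therefore gives `E[ν(x_a) ν(x_b)] = e^{-τ(a,b)}`, so that
`E[S²] = ∑_{ℓ,ℓ'} Ψ(ℓ) Ψ(ℓ') e^{2τ(ρ, ℓ ∧ ℓ')}`. Grouping the vertices of level `k + 1` by
their parents and using `Ψ(v) = Ψ(v0) + Ψ(v1)`, the same double sum over level `k + 1` exceeds
the one over level `k` by `∑_{|w| = k+1} (e^{2τ(ρ,w)} - e^{2τ(ρ,parent w)}) Ψ(w)²`, which is
the level-`(k + 1)` part of `K_Ψ`.
-/

open Function Finset
open scoped Matrix

section IntegrateOut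

variable {I Φ : Type*} [Fintype I] [DecidableEq I] [Fintype Φ]

theorem card_mul_sum_apply_eq_sum_sum (j : I) {H : (I → Φ) → Φ → ℝ}
    (hH : ∀ x c, H (update x j c) = H x) :
    (Fintype.card Φ : ℝ) * ∑ x, H x (x j) = ∑ x, ∑ c, H x c := by
  let σ : (I → Φ) × Φ → (I → Φ) × Φ := fun p => (update p.1 j p.2, p.1 j)
  have hσ : Involutive σ := fun p => by simp [σ]
  calc (Fintype.card Φ : ℝ) * ∑ x, H x (x j) = ∑ p : (I → Φ) × Φ, H p.1 (p.1 j) := by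
        simp [Fintype.sum_prod_type, mul_sum]
    _ = ∑ p : (I → Φ) × Φ, H p.1 p.2 :=
        Fintype.sum_bijective σ hσ.bijective _ _ fun p => by simp [σ, hH]
    _ = ∑ x, ∑ c, H x c := Fintype.sum_prod_type _

theorem sum_mul_apply_eq_of_sum_eq (j : I) {F : (I → Φ) → ℝ} {G G' : (I → Φ) → Φ → ℝ}
    (hF : ∀ x c, F (update x j c) = F x) (hG : ∀ x c, G (update x j c) = G x)
    (hG' : ∀ x c, G' (update x j c) = G' x) (hGG' : ∀ x, ∑ c, G x c = ∑ c, G' x c) :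
    ∑ x, F x * G x (x j) = ∑ x, F x * G' x (x j) := by
  cases isEmpty_or_nonempty Φ
  · have : IsEmpty (I → Φ) := isEmpty_fun.mpr ⟨⟨j⟩, ‹IsEmpty Φ›⟩
    simp
  refine mul_left_cancel₀ (Nat.cast_ne_zero.mpr (Fintype.card_ne_zero (α := Φ))) ?_
  rw [card_mul_sum_apply_eq_sum_sum j (H := fun x c => F x * G x c) (by simp [hF, hG]),
    card_mul_sum_apply_eq_sum_sum j (H := fun x c => F x * G' x c) (by simp [hF, hG'])]
  simp only [← mul_sum, hGG']

theorem sum_prod_mul_apply {R : Type*} [CommSemiring R] {π : Φ → R} (hπ : ∑ c, π c = 1)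
    (j : I) (f : Φ → R) :
    ∑ x : I → Φ, (∏ i, π (x i)) * f (x j) = ∑ c, π c * f c := by
  have hfac (x : I → Φ) :
      (∏ i, π (x i)) * f (x j) = ∏ i, π (x i) * (if i = j then f (x i) else 1) := by
    rw [prod_mul_distrib, prod_ite_eq' univ j, if_pos (mem_univ j)]
  rw [sum_congr rfl fun x _ => hfac x,
    ← Fintype.prod_sum fun i c => π c * if i = j then f c else 1]
  simp_rw [mul_ite, mul_one, sum_ite_irrel, hπ]
  rw [prod_ite_eq' univ j, if_pos (mem_univ j)]

end IntegrateOut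

section MatrixExponential

variable {Φ : Type*} [Fintype Φ]

theorem vecMul_eq_zero_of_reversible {Q : Matrix Φ Φ ℝ} {π : Φ → ℝ}
    (hQrow : ∀ i, ∑ j, Q i j = 0) (hrev : ∀ i j, π i * Q i j = π j * Q j i) : π ᵥ* Q = 0 := by
  ext j
  simp [Matrix.vecMul, dotProduct, hrev _ j, ← mul_sum, hQrow]

variable [DecidableEq Φ]

theorem matExp_mulVec_of_mulVec_eq_smul {A : Matrix Φ Φ ℝ} {v : Φ → ℝ} {c : ℝ}
    (hv : A *ᵥ v = c • v) : matExp A *ᵥ v = Real.exp c • v := by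
  let : NormedRing (Matrix Φ Φ ℝ) := Matrix.linftyOpNormedRing
  let : NormedAlgebra ℝ (Matrix Φ Φ ℝ) := Matrix.linftyOpNormedAlgebra
  let T : Matrix Φ Φ ℝ →L[ℝ] Φ → ℝ := LinearMap.toContinuousLinearMap
    { toFun M := M *ᵥ v, map_add' M N := Matrix.add_mulVec M N v,
      map_smul' r M := Matrix.smul_mulVec r M v }
  have hpow (n : ℕ) : A ^ n *ᵥ v = c ^ n • v := by
    induction n with
    | zero => simp
    | succ n ih =>
      rw [pow_succ', ← Matrix.mulVec_mulVec, ih, Matrix.mulVec_smul, hv, smul_smul, pow_succ]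
  have hA := (NormedSpace.exp_series_hasSum_exp' (𝕂 := ℝ) A).mapL T
  have hc := (NormedSpace.exp_series_hasSum_exp' (𝕂 := ℝ) c).smul_const v
  rw [← Real.exp_eq_exp_ℝ] at hc
  refine hA.unique ?_
  convert hc using 2 with n
  simp [T, hpow, smul_smul]

theorem vecMul_matExp_of_vecMul_eq_smul {A : Matrix Φ Φ ℝ} {v : Φ → ℝ} {c : ℝ}
    (hv : v ᵥ* A = c • v) : v ᵥ* matExp A = Real.exp c • v := by
  rw [← Matrix.mulVec_transpose, matExp, ← Matrix.exp_transpose]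
  exact matExp_mulVec_of_mulVec_eq_smul (by rwa [Matrix.mulVec_transpose])

variable {Q : Matrix Φ Φ ℝ}

theorem matExp_smul_mulVec_one (hQrow : ∀ i, ∑ j, Q i j = 0) (t : ℝ) :
    matExp (t • Q) *ᵥ 1 = 1 := by
  simpa using matExp_mulVec_of_mulVec_eq_smul (v := 1) (c := 0) (by
    ext i; simp [Matrix.mulVec, dotProduct, ← mul_sum, hQrow])

theorem matExp_smul_mulVec_of_mulVec_eq_neg {ν : Φ → ℝ} (hν : Q *ᵥ ν = -ν) (t : ℝ) :
    matExp (t • Q) *ᵥ ν = Real.exp (-t) • ν :=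
  matExp_mulVec_of_mulVec_eq_smul (by rw [Matrix.smul_mulVec, hν, smul_neg, neg_smul])

theorem vecMul_matExp_smul_of_reversible {π : Φ → ℝ} (hQrow : ∀ i, ∑ j, Q i j = 0)
    (hrev : ∀ i j, π i * Q i j = π j * Q j i) (t : ℝ) :
    π ᵥ* matExp (t • Q) = π := by
  simpa using vecMul_matExp_of_vecMul_eq_smul (v := π) (c := 0) (by
    rw [Matrix.vecMul_smul, vecMul_eq_zero_of_reversible hQrow hrev, smul_zero, zero_smul])

end MatrixExponential

section HeapIndexing

theorem idx_val {h v : ℕ} (hv : 1 ≤ v) (hv' : v < 2 ^ (h + 1)) : (idx h v : ℕ) = v - 1 :=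
  Nat.mod_eq_of_lt (by omega)

theorem update_idx_apply_of_ne {α : Type*} {h u v : ℕ} (hu : 1 ≤ u) (hu' : u < 2 ^ (h + 1))
    (hv : 1 ≤ v) (hv' : v < 2 ^ (h + 1)) (huv : u ≠ v) (x : Fin (2 ^ (h + 1) - 1) → α)
    (c : α) : update x (idx h v) c (idx h u) = x (idx h u) := by
  refine update_of_ne (fun hidx => huv ?_) c x
  have := congrArg Fin.val hidx
  rw [idx_val hu hu', idx_val hv hv'] at this
  omega

theorem prod_Ico_one_idx {α M : Type*} [CommMonoid M] (h : ℕ) (f : α → M)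
    (x : Fin (2 ^ (h + 1) - 1) → α) :
    ∏ v ∈ Ico 1 (2 ^ (h + 1)), f (x (idx h v)) = ∏ i, f (x i) := by
  rw [prod_Ico_eq_prod_range, ← Fin.prod_univ_eq_prod_range]
  refine Fintype.prod_congr _ _ fun i => ?_
  congr 2
  ext
  rw [idx_val (by omega) (by omega)]
  simp

theorem pathSum_of_le (τ : ℕ → ℝ) {a v : ℕ} (hv : v ≤ a) : pathSum τ a v = 0 := by
  rw [pathSum, dif_pos hv]

theorem pathSum_of_lt (τ : ℕ → ℝ) {a v : ℕ} (hv : a < v) :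
    pathSum τ a v = τ v + pathSum τ a (v / 2) := by
  rw [pathSum, dif_neg (by omega)]

theorem lca_self (a : ℕ) : lca a a = a := by
  rw [lca, if_pos rfl]

theorem lca_of_ne {a b : ℕ} (hab : a ≠ b) : lca a b = lca (a / 2) (b / 2) := by
  rw [lca, if_neg hab]

end HeapIndexing

section HeapMeet

/-- The last common ancestor of two vertices of arbitrary levels in heap indexing: the one
with the larger index is never an ancestor of the other, so it may be replaced by its parent. -/
def heapMeet (a b : ℕ) : ℕ :=
  if a = b then a else heapMeet (min a b) (max a b / 2)
termination_by a + b
decreasing_by omega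

theorem heapMeet_self (a : ℕ) : heapMeet a a = a := by
  rw [heapMeet, if_pos rfl]

theorem heapMeet_of_ne {a b : ℕ} (hab : a ≠ b) :
    heapMeet a b = heapMeet (min a b) (max a b / 2) := by
  rw [heapMeet, if_neg hab]

theorem heapMeet_comm (a b : ℕ) : heapMeet a b = heapMeet b a := by
  by_cases hab : a = b
  · rw [hab]
  · rw [heapMeet_of_ne hab, heapMeet_of_ne (Ne.symm hab), min_comm, max_comm]

theorem heapMeet_of_lt {a b : ℕ} (hab : a < b) : heapMeet a b = heapMeet a (b / 2) := by
  rw [heapMeet_of_ne hab.ne, min_eq_left hab.le, max_eq_right hab.le]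

theorem heapMeet_eq_heapMeet_div_two_of_lt {L a b : ℕ} (ha : 2 ^ L ≤ a) (hab : a < b)
    (hb : b < 2 ^ (L + 1)) : heapMeet a b = heapMeet (a / 2) (b / 2) := by
  rw [heapMeet_of_lt hab, heapMeet_comm, heapMeet_of_lt (by rw [pow_succ] at hb; omega),
    heapMeet_comm]

theorem heapMeet_eq_lca {L a b : ℕ} (ha : 2 ^ L ≤ a) (ha' : a < 2 ^ (L + 1)) (hb : 2 ^ L ≤ b)
    (hb' : b < 2 ^ (L + 1)) : heapMeet a b = lca a b := by
  induction L generalizing a b with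
  | zero =>
    obtain ⟨rfl, rfl⟩ : a = 1 ∧ b = 1 := by omega
    rw [heapMeet_self, lca_self]
  | succ L ih =>
    by_cases hab : a = b
    · rw [hab, heapMeet_self, lca_self]
    have hhalf : heapMeet a b = heapMeet (a / 2) (b / 2) := by
      rcases lt_or_gt_of_ne hab with hab | hab
      · exact heapMeet_eq_heapMeet_div_two_of_lt ha hab hb'
      · rw [heapMeet_comm, heapMeet_eq_heapMeet_div_two_of_lt hb hab ha', heapMeet_comm]
    rw [hhalf, lca_of_ne hab, ih] <;> rw [pow_succ] at * <;> omega

end HeapMeet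

section TreeChain

variable {Φ : Type*} {h : ℕ} {π : Φ → ℝ} {K : ℕ → Matrix Φ Φ ℝ}

/-- The law of the tree-indexed chain with kernels `K v` in which the vertices `v ≥ n` are
drawn independently from `π` instead. -/
noncomputable def treeChainWeight (h n : ℕ) (π : Φ → ℝ) (K : ℕ → Matrix Φ Φ ℝ)
    (x : Fin (2 ^ (h + 1) - 1) → Φ) : ℝ :=
  π (x (idx h 1)) * (∏ v ∈ Ico 2 n, K v (x (idx h (v / 2))) (x (idx h v))) *
    ∏ v ∈ Ico n (2 ^ (h + 1)), π (x (idx h v))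

theorem treeChainWeight_two (x : Fin (2 ^ (h + 1) - 1) → Φ) :
    treeChainWeight h 2 π K x = ∏ i, π (x i) := by
  have : 1 < 2 ^ (h + 1) := Nat.one_lt_two_pow (by omega)
  rw [treeChainWeight, Ico_self, prod_empty, mul_one, ← prod_Ico_one_idx h π x,
    prod_eq_prod_Ico_succ_bot this]

variable [Fintype Φ]

theorem sum_treeChainWeight_succ_mul_apply (hπ : ∑ c, π c = 1) {n : ℕ} (hn : 2 ≤ n)
    (hn' : n < 2 ^ (h + 1)) {f : (Fin (2 ^ (h + 1) - 1) → Φ) → ℝ}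
    (hf : ∀ x c, f (update x (idx h n) c) = f x) (g : Φ → ℝ) :
    ∑ x, treeChainWeight h (n + 1) π K x * (f x * g (x (idx h n))) =
      ∑ x, treeChainWeight h n π K x * (f x * (K n *ᵥ g) (x (idx h (n / 2)))) := by
  let P (x : Fin (2 ^ (h + 1) - 1) → Φ) : ℝ :=
    π (x (idx h 1)) * (∏ v ∈ Ico 2 n, K v (x (idx h (v / 2))) (x (idx h v))) *
      ∏ v ∈ Ico (n + 1) (2 ^ (h + 1)), π (x (idx h v))
  have hupd {u : ℕ} (hu : 1 ≤ u) (hu' : u < 2 ^ (h + 1)) (hun : u ≠ n)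
      (x : Fin (2 ^ (h + 1) - 1) → Φ) (c : Φ) :=
    update_idx_apply_of_ne (h := h) hu hu' (by omega) hn' hun x c
  have hP x c : P (update x (idx h n) c) = P x := by
    simp only [P]
    rw [hupd (u := 1) le_rfl (by omega) (by omega)]
    congr 1
    · congr 1
      refine prod_congr rfl fun v hv => ?_
      rw [mem_Ico] at hv
      rw [hupd (u := v) (by omega) (by omega) (by omega),
        hupd (u := v / 2) (by omega) (by omega) (by omega)]
    · refine prod_congr rfl fun v hv => ?_
      rw [mem_Ico] at hv
      rw [hupd (u := v) (by omega) hv.2 (by omega)]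
  have hsucc x :
      treeChainWeight h (n + 1) π K x = P x * K n (x (idx h (n / 2))) (x (idx h n)) := by
    simp only [treeChainWeight, P, prod_Ico_succ_top hn]; ring
  have hself x : treeChainWeight h n π K x = P x * π (x (idx h n)) := by
    simp only [treeChainWeight, P, prod_eq_prod_Ico_succ_bot hn']; ring
  have key := sum_mul_apply_eq_of_sum_eq (idx h n) (F := fun x => P x * f x)
    (G := fun x c => K n (x (idx h (n / 2))) c * g c)
    (G' := fun x c => (K n *ᵥ g) (x (idx h (n / 2))) * π c)
    (fun x c => by simp only [hP, hf])
    (fun x c => by rw [hupd (by omega) (by omega) (by omega)])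
    (fun x c => by rw [hupd (by omega) (by omega) (by omega)])
    (fun x => by simp [← mul_sum, hπ, Matrix.mulVec, dotProduct])
  simp only [hsucc, hself]
  convert key using 2 with x <;> ring

theorem sum_treeChainWeight_succ_mul (hπ : ∑ c, π c = 1) (hK1 : ∀ v, K v *ᵥ 1 = 1)
    {n : ℕ} (hn : 2 ≤ n) (hn' : n < 2 ^ (h + 1)) {f : (Fin (2 ^ (h + 1) - 1) → Φ) → ℝ}
    (hf : ∀ x c, f (update x (idx h n) c) = f x) :
    ∑ x, treeChainWeight h (n + 1) π K x * f x = ∑ x, treeChainWeight h n π K x * f x := by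
  simpa [hK1] using sum_treeChainWeight_succ_mul_apply (K := K) hπ hn hn' hf 1

theorem sum_treeChainWeight_mul_apply (hπ : ∑ c, π c = 1) (hK1 : ∀ v, K v *ᵥ 1 = 1)
    (hKπ : ∀ v, π ᵥ* K v = π) {n : ℕ} (hn : 2 ≤ n) (hn' : n ≤ 2 ^ (h + 1)) {a : ℕ}
    (ha : 1 ≤ a) (ha' : a < 2 ^ (h + 1)) (f : Φ → ℝ) :
    ∑ x, treeChainWeight h n π K x * f (x (idx h a)) = π ⬝ᵥ f := by
  induction n, hn using Nat.le_induction generalizing a f with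
  | base => simp_rw [treeChainWeight_two]; exact sum_prod_mul_apply hπ _ f
  | succ n hn ih =>
    by_cases han : a = n
    · subst han
      have := sum_treeChainWeight_succ_mul_apply (K := K) hπ hn (by omega) (f := fun _ => 1)
        (fun _ _ => rfl) f
      simp only [one_mul] at this
      rw [this, ih (by omega) (by omega) (by omega), Matrix.dotProduct_mulVec, hKπ]
    · rw [sum_treeChainWeight_succ_mul hπ hK1 hn (by omega)
        fun x c => by rw [update_idx_apply_of_ne ha ha' (by omega) (by omega) han],
        ih (by omega) ha ha']

theorem sum_treeChainWeight_mul_mul (hπ : ∑ c, π c = 1) (hK1 : ∀ v, K v *ᵥ 1 = 1)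
    (hKπ : ∀ v, π ᵥ* K v = π) {ν : Φ → ℝ} {τ : ℕ → ℝ}
    (hKν : ∀ v, K v *ᵥ ν = Real.exp (-τ v) • ν) {n : ℕ} (hn : 2 ≤ n) (hn' : n ≤ 2 ^ (h + 1))
    {a b : ℕ} (ha : 1 ≤ a) (ha' : a < n) (hb : 1 ≤ b) (hb' : b < n) :
    ∑ x, treeChainWeight h n π K x * (ν (x (idx h a)) * ν (x (idx h b))) =
      (∑ c, π c * ν c ^ 2) *
        Real.exp (2 * pathSum τ 1 (heapMeet a b) - pathSum τ 1 a - pathSum τ 1 b) := by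
  have hdiag {m : ℕ} (hm : 2 ≤ m) (hm' : m ≤ 2 ^ (h + 1)) {a : ℕ} (ha : 1 ≤ a)
      (ha' : a < 2 ^ (h + 1)) :
      ∑ x, treeChainWeight h m π K x * (ν (x (idx h a)) * ν (x (idx h a))) =
        (∑ c, π c * ν c ^ 2) *
          Real.exp (2 * pathSum τ 1 (heapMeet a a) - pathSum τ 1 a - pathSum τ 1 a) := by
    rw [heapMeet_self, sub_sub, ← two_mul, sub_self, Real.exp_zero, mul_one]
    simpa [dotProduct, sq] using
      sum_treeChainWeight_mul_apply hπ hK1 hKπ hm hm' ha ha' fun c => ν c * ν c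
  induction n, hn using Nat.le_induction generalizing a b with
  | base =>
    obtain ⟨rfl, rfl⟩ : a = 1 ∧ b = 1 := by omega
    exact hdiag le_rfl hn' le_rfl (by omega)
  | succ n hn ih =>
    wlog hab : a ≤ b generalizing a b
    · rw [heapMeet_comm, sub_right_comm, ← this hb hb' ha ha' (by omega)]
      exact sum_congr rfl fun x _ => by ring
    obtain rfl | hab := eq_or_lt_of_le hab
    · exact hdiag (by omega) hn' ha (by omega)
    by_cases hbn : b = n
    · subst hbn
      rw [sum_treeChainWeight_succ_mul_apply hπ hn (by omega)
          fun x c => by rw [update_idx_apply_of_ne ha (by omega) (by omega) (by omega) hab.ne],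
        hKν]
      simp only [Pi.smul_apply, smul_eq_mul, mul_left_comm _ (Real.exp _), ← mul_sum]
      rw [ih (by omega) ha (by omega) (by omega) (by omega), heapMeet_of_lt hab,
        pathSum_of_lt τ (show 1 < b by omega), mul_left_comm, ← Real.exp_add]
      ring_nf
    · rw [sum_treeChainWeight_succ_mul hπ hK1 hn (by omega)
        fun x c => by rw [update_idx_apply_of_ne ha (by omega) (by omega) (by omega) (by omega),
          update_idx_apply_of_ne hb (by omega) (by omega) (by omega) hbn],
        ih (by omega) ha (by omega) hb (by omega)]

end TreeChain

section FlowIdentity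

theorem sum_Ico_two_mul {M : Type*} [AddCommMonoid M] (f : ℕ → M) {m n : ℕ} (hmn : m ≤ n) :
    ∑ ℓ ∈ Ico (2 * m) (2 * n), f ℓ = ∑ p ∈ Ico m n, (f (2 * p) + f (2 * p + 1)) := by
  induction n, hmn using Nat.le_induction with
  | base => simp
  | succ n hmn ih =>
    rw [mul_add, mul_one, sum_Ico_succ_top (by omega), sum_Ico_succ_top (by omega), ih,
      sum_Ico_succ_top hmn, add_assoc]

variable {Ψ : ℕ → ℝ}

theorem sum_mul_div_two_of_flow {m n : ℕ} (hmn : m ≤ n)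
    (hflow : ∀ p ∈ Ico m n, Ψ p = Ψ (2 * p) + Ψ (2 * p + 1)) (g : ℕ → ℝ) :
    ∑ ℓ ∈ Ico (2 * m) (2 * n), Ψ ℓ * g (ℓ / 2) = ∑ p ∈ Ico m n, Ψ p * g p := by
  rw [sum_Ico_two_mul _ hmn]
  refine sum_congr rfl fun p hp => ?_
  rw [hflow p hp, show (2 * p + 1) / 2 = p by omega, show 2 * p / 2 = p by omega, add_mul]

theorem sum_sum_mul_lca_two_mul (E : ℕ → ℝ) {m n : ℕ} (hmn : m ≤ n)
    (hflow : ∀ p ∈ Ico m n, Ψ p = Ψ (2 * p) + Ψ (2 * p + 1)) :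
    ∑ ℓ ∈ Ico (2 * m) (2 * n), ∑ ℓ' ∈ Ico (2 * m) (2 * n), Ψ ℓ * Ψ ℓ' * E (lca ℓ ℓ') =
      ∑ p ∈ Ico m n, ∑ p' ∈ Ico m n, Ψ p * Ψ p' * E (lca p p') +
        ∑ ℓ ∈ Ico (2 * m) (2 * n), (E ℓ - E (ℓ / 2)) * Ψ ℓ ^ 2 := by
  have hlca (a b : ℕ) :
      E (lca a b) = E (lca (a / 2) (b / 2)) + if a = b then E a - E (a / 2) else 0 := by
    by_cases hab : a = b
    · rw [hab, if_pos rfl, lca_self, lca_self]; ring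
    · rw [lca_of_ne hab, if_neg hab, add_zero]
  have hsplit (ℓ ℓ' : ℕ) :
      Ψ ℓ * Ψ ℓ' * E (lca ℓ ℓ') = Ψ ℓ * (Ψ ℓ' * E (lca (ℓ / 2) (ℓ' / 2))) +
        if ℓ = ℓ' then (E ℓ - E (ℓ / 2)) * Ψ ℓ ^ 2 else 0 := by
    rw [hlca]
    split_ifs with h
    · subst h; ring
    · ring
  calc ∑ ℓ ∈ Ico (2 * m) (2 * n), ∑ ℓ' ∈ Ico (2 * m) (2 * n), Ψ ℓ * Ψ ℓ' * E (lca ℓ ℓ')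
      = ∑ ℓ ∈ Ico (2 * m) (2 * n), Ψ ℓ * ∑ ℓ' ∈ Ico (2 * m) (2 * n),
            Ψ ℓ' * E (lca (ℓ / 2) (ℓ' / 2)) +
          ∑ ℓ ∈ Ico (2 * m) (2 * n), (E ℓ - E (ℓ / 2)) * Ψ ℓ ^ 2 := by
        rw [← sum_add_distrib]
        refine sum_congr rfl fun ℓ hℓ => ?_
        rw [sum_congr rfl fun ℓ' _ => hsplit ℓ ℓ', sum_add_distrib, sum_ite_eq, if_pos hℓ,
          mul_sum]
    _ = ∑ p ∈ Ico m n, Ψ p * ∑ p' ∈ Ico m n, Ψ p' * E (lca p p') +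
          ∑ ℓ ∈ Ico (2 * m) (2 * n), (E ℓ - E (ℓ / 2)) * Ψ ℓ ^ 2 := by
        rw [← sum_mul_div_two_of_flow hmn hflow]
        congr 1
        exact sum_congr rfl fun ℓ _ => by
          rw [sum_mul_div_two_of_flow hmn hflow fun p' => E (lca (ℓ / 2) p')]
    _ = _ := by simp only [mul_sum, mul_assoc]

theorem sum_sum_mul_lca_level (E : ℕ → ℝ) {k : ℕ}
    (hflow : ∀ v, 1 ≤ v → v < 2 ^ k → Ψ v = Ψ (2 * v) + Ψ (2 * v + 1)) :
    ∑ ℓ ∈ Ico (2 ^ k) (2 ^ (k + 1)), ∑ ℓ' ∈ Ico (2 ^ k) (2 ^ (k + 1)),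
        Ψ ℓ * Ψ ℓ' * E (lca ℓ ℓ') =
      Ψ 1 ^ 2 * E 1 + ∑ v ∈ Ico 2 (2 ^ (k + 1)), (E v - E (v / 2)) * Ψ v ^ 2 := by
  induction k with
  | zero => simp [lca_self, sq]
  | succ k ih =>
    simp only [pow_succ' (2 : ℕ)] at ih hflow ⊢
    have hk : 1 ≤ 2 ^ k := Nat.one_le_two_pow
    rw [sum_sum_mul_lca_two_mul E (by omega) fun p hp => hflow p (by rw [mem_Ico] at hp; omega)
        (by rw [mem_Ico] at hp; omega),
      ih fun v hv hv' => hflow v hv (by omega), add_assoc,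
      sum_Ico_consecutive _ (by omega) (by omega)]

end FlowIdentity

theorem sum_sum_mul_exp_lca_eq_one_add_Kflow {h : ℕ} {τ Ψ : ℕ → ℝ} (hΨ1 : Ψ 1 = 1)
    (hflow : ∀ v, 1 ≤ v → v < 2 ^ h → Ψ v = Ψ (2 * v) + Ψ (2 * v + 1)) :
    ∑ ℓ ∈ Ico (2 ^ h) (2 ^ (h + 1)), ∑ ℓ' ∈ Ico (2 ^ h) (2 ^ (h + 1)),
      Ψ ℓ * Ψ ℓ' * Real.exp (2 * pathSum τ 1 (lca ℓ ℓ')) = 1 + Kflow h τ Ψ := by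
  rw [sum_sum_mul_lca_level (fun v => Real.exp (2 * pathSum τ 1 v)) hflow, hΨ1,
    pathSum_of_le τ le_rfl, mul_zero, Real.exp_zero, one_pow, one_mul, Kflow]
  congr 1
  refine sum_congr rfl fun v hv => ?_
  have hinv : Real.exp (-(2 * τ v)) * Real.exp (2 * τ v) = 1 := by
    rw [← Real.exp_add, neg_add_cancel, Real.exp_zero]
  rw [pathSum_of_lt τ (by rw [mem_Ico] at hv; omega), mul_add, Real.exp_add]
  linear_combination Real.exp (2 * pathSum τ 1 (v / 2)) * Ψ v ^ 2 * hinv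

theorem sum_mul_sq_sum {α ι : Type*} [Fintype α] (w : α → ℝ) (s : Finset ι) (a : ι → ℝ)
    (Y : ι → α → ℝ) :
    ∑ x, w x * (∑ i ∈ s, a i * Y i x) ^ 2 =
      ∑ i ∈ s, ∑ j ∈ s, a i * a j * ∑ x, w x * (Y i x * Y j x) := by
  simp_rw [sq, sum_mul_sum, mul_sum]
  rw [sum_comm]
  refine sum_congr rfl fun i _ => ?_
  rw [sum_comm]
  exact sum_congr rfl fun j _ => sum_congr rfl fun x _ => by ring

theorem gtrP_eq_treeChainWeight {Φ : Type*} [Fintype Φ] [DecidableEq Φ] (h : ℕ) (π : Φ → ℝ)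
    (Q : Matrix Φ Φ ℝ) (τ : ℕ → ℝ) :
    gtrP h π Q τ = treeChainWeight h (2 ^ (h + 1)) π fun v => matExp (τ v • Q) := by
  ext x
  simp [gtrP, treeChainWeight]

theorem sum_gtrP_mul_mul {Φ : Type*} [Fintype Φ] [DecidableEq Φ] {h : ℕ} {Q : Matrix Φ Φ ℝ}
    {π ν : Φ → ℝ} (hQrow : ∀ i, ∑ j, Q i j = 0) (hπsum : ∑ i, π i = 1)
    (hrev : ∀ i j, π i * Q i j = π j * Q j i) (hν : Q *ᵥ ν = -ν) (τ : ℕ → ℝ) {a b : ℕ}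
    (ha : 1 ≤ a) (ha' : a < 2 ^ (h + 1)) (hb : 1 ≤ b) (hb' : b < 2 ^ (h + 1)) :
    ∑ x, gtrP h π Q τ x * (ν (x (idx h a)) * ν (x (idx h b))) =
      (∑ c, π c * ν c ^ 2) *
        Real.exp (2 * pathSum τ 1 (heapMeet a b) - pathSum τ 1 a - pathSum τ 1 b) := by
  rw [gtrP_eq_treeChainWeight]
  exact sum_treeChainWeight_mul_mul hπsum (fun _ => matExp_smul_mulVec_one hQrow _)
    (fun _ => vecMul_matExp_smul_of_reversible hQrow hrev _)
    (fun _ => matExp_smul_mulVec_of_mulVec_eq_neg hν _) (by omega) le_rfl ha ha' hb hb'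

theorem weighted_majority_variance_general {Φ : Type*} [Fintype Φ] [DecidableEq Φ]
    (Q : Matrix Φ Φ ℝ) (π ν : Φ → ℝ)
    (hQrow : ∀ i, ∑ j : Φ, Q i j = 0)
    (hπsum : ∑ i : Φ, π i = 1)
    (hrev : ∀ i j, π i * Q i j = π j * Q j i)
    (hν : Q.mulVec ν = -ν)
    (hnorm : ∑ i : Φ, π i * ν i ^ 2 = 1) :
    ∀ h : ℕ, 1 ≤ h →
    ∀ τ : ℕ → ℝ, (∀ v, 2 ≤ v → v < 2 ^ (h + 1) → 0 < τ v) →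
    ∀ Ψ : ℕ → ℝ, IsUnitFlow h Ψ →
      ∑ x : Fin (2 ^ (h + 1) - 1) → Φ, gtrP h π Q τ x * (estS h ν τ Ψ x) ^ 2 =
        1 + Kflow h τ Ψ := by
  rintro h - τ - Ψ ⟨hΨ1, -, hflow⟩
  have hcorr : ∀ ℓ ∈ Ico (2 ^ h) (2 ^ (h + 1)), ∀ ℓ' ∈ Ico (2 ^ h) (2 ^ (h + 1)),
      ∑ x, gtrP h π Q τ x * (ν (x (idx h ℓ)) * ν (x (idx h ℓ'))) =
        Real.exp (2 * pathSum τ 1 (lca ℓ ℓ') - pathSum τ 1 ℓ - pathSum τ 1 ℓ') := by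
    intro ℓ hℓ ℓ' hℓ'
    rw [mem_Ico] at hℓ hℓ'
    have := Nat.one_le_two_pow (n := h)
    rw [sum_gtrP_mul_mul hQrow hπsum hrev hν τ (by omega) hℓ.2 (by omega) hℓ'.2, hnorm, one_mul,
      heapMeet_eq_lca hℓ.1 hℓ.2 hℓ'.1 hℓ'.2]
  calc ∑ x, gtrP h π Q τ x * estS h ν τ Ψ x ^ 2
      = ∑ ℓ ∈ Ico (2 ^ h) (2 ^ (h + 1)), ∑ ℓ' ∈ Ico (2 ^ h) (2 ^ (h + 1)),
          Ψ ℓ * Real.exp (pathSum τ 1 ℓ) * (Ψ ℓ' * Real.exp (pathSum τ 1 ℓ')) *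
            ∑ x, gtrP h π Q τ x * (ν (x (idx h ℓ)) * ν (x (idx h ℓ'))) := by
        rw [← sum_mul_sq_sum]
        simp only [estS, mul_right_comm (Ψ _)]
    _ = ∑ ℓ ∈ Ico (2 ^ h) (2 ^ (h + 1)), ∑ ℓ' ∈ Ico (2 ^ h) (2 ^ (h + 1)),
          Ψ ℓ * Ψ ℓ' * Real.exp (2 * pathSum τ 1 (lca ℓ ℓ')) := by
        refine sum_congr rfl fun ℓ hℓ => sum_congr rfl fun ℓ' hℓ' => ?_
        rw [hcorr ℓ hℓ ℓ' hℓ', mul_mul_mul_comm, mul_assoc, ← Real.exp_add, ← Real.exp_add]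
        ring_nf
    _ = 1 + Kflow h τ Ψ := sum_sum_mul_exp_lca_eq_one_add_Kflow hΨ1 hflow

/-- (Weighted Majority: GTR Version, variance part.) For every depth `h ≥ 1`, positive
edge weights, and unit flow `Ψ`: `E[S²] = Var[S] = 1 + K_Ψ`. -/
theorem weighted_majority_variance {Φ : Type*} [Fintype Φ] [DecidableEq Φ]
    (hcard : 2 ≤ Fintype.card Φ)
    (Q : Matrix Φ Φ ℝ) (π ν : Φ → ℝ)
    (hQoff : ∀ i j, i ≠ j → 0 < Q i j)
    (hQrow : ∀ i, ∑ j : Φ, Q i j = 0)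
    (hπpos : ∀ i, 0 < π i)
    (hπsum : ∑ i : Φ, π i = 1)
    (hrev : ∀ i j, π i * Q i j = π j * Q j i)
    (hν : Q.mulVec ν = -ν)
    (hnorm : ∑ i : Φ, π i * ν i ^ 2 = 1) :
    ∀ h : ℕ, 1 ≤ h →
    ∀ τ : ℕ → ℝ, (∀ v, 2 ≤ v → v < 2 ^ (h + 1) → 0 < τ v) →
    ∀ Ψ : ℕ → ℝ, IsUnitFlow h Ψ →
      ∑ x : Fin (2 ^ (h + 1) - 1) → Φ, gtrP h π Q τ x * (estS h ν τ Ψ x) ^ 2 =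
        1 + Kflow h τ Ψ :=
  weighted_majority_variance_general Q π ν hQrow hπsum hrev hν hnorm
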